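/- Fix N ∈ ℕ, let D : ℂ^N → ℂ^{N−1} be the finite-difference operator (Dx)_j = x_{j+1} − x_j, let Λ ⊂ {1,…,N−1}, and let (P_Λ D)† : ℂ^{N−1} → ℂ^N be the Moore–Penrose pseudoinverse of P_Λ D. Then for every column index j ∈ {1,…,N−1} and every frequency k ∈ ℤ with 1 ≤ |k| ≤ ⌈N/2⌉, |⟨A (P_Λ D)† e_j, e_k⟩| ≤ √2·√N/|k|, and for k = 0, |⟨A (P_Λ D)† e_j, e_0⟩| ≤ √N. -/

import Mathlib

open scoped ComplexConjugate

/-- Matrix entries of `P_Λ D` (rows `i ∈ {1,…,N-1}`, columns `j ∈ {1,…,N}`):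
row `i` is `(…, -1, +1, …)` (with `-1` at column `i`) if `i ∈ Λ`, and zero otherwise. -/
def PLD (Λ : Finset ℕ) (i j : ℕ) : ℂ :=
  if i ∈ Λ then (if j = i + 1 then 1 else if j = i then -1 else 0) else 0

/-- `G : ℂ^{N-1} → ℂ^N` (rows `1,…,N`, columns `1,…,N-1`) is a Moore–Penrose
pseudoinverse of `P_Λ D`:  `TGT = T`, `GTG = G`, and `TG`, `GT` are self-adjoint. -/
structure IsPseudoInv (N : ℕ) (Λ : Finset ℕ) (G : ℕ → ℕ → ℂ) : Prop where
  tgt : ∀ i ∈ Finset.Icc 1 (N - 1), ∀ j ∈ Finset.Icc 1 N,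
    ∑ a ∈ Finset.Icc 1 N, ∑ b ∈ Finset.Icc 1 (N - 1),
      PLD Λ i a * G a b * PLD Λ b j = PLD Λ i j
  gtg : ∀ i ∈ Finset.Icc 1 N, ∀ j ∈ Finset.Icc 1 (N - 1),
    ∑ a ∈ Finset.Icc 1 (N - 1), ∑ b ∈ Finset.Icc 1 N,
      G i a * PLD Λ a b * G b j = G i j
  tg_sa : ∀ i ∈ Finset.Icc 1 (N - 1), ∀ j ∈ Finset.Icc 1 (N - 1),
    conj (∑ a ∈ Finset.Icc 1 N, PLD Λ j a * G a i) =
      ∑ a ∈ Finset.Icc 1 N, PLD Λ i a * G a j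
  gt_sa : ∀ i ∈ Finset.Icc 1 N, ∀ j ∈ Finset.Icc 1 N,
    conj (∑ b ∈ Finset.Icc 1 (N - 1), G j b * PLD Λ b i) =
      ∑ b ∈ Finset.Icc 1 (N - 1), G i b * PLD Λ b j

/-- The (unitary) DFT of `y : ℂ^N` (entries `y 1, …, y N`) at frequency `k ∈ ℤ`. -/
noncomputable def dft (N : ℕ) (y : ℕ → ℂ) (k : ℤ) : ℂ :=
  (Real.sqrt N)⁻¹ * ∑ j ∈ Finset.Icc 1 N, y j *
    Complex.exp (2 * Real.pi * Complex.I * (j : ℂ) * (k : ℂ) / (N : ℂ))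

/-!
Write `T = P_Λ D` and let `g` be the `j`-th column of `G = T†`. From `G = GTG` and the
self-adjointness of `GT` we get `G = T* (G* G)`, so `g = T* w` with `w` supported on `Λ`: the sum of
`g` over every maximal run `{p, …, q}` (with `p - 1, q ∉ Λ` and `p, …, q - 1 ∈ Λ`) telescopes to
zero. From `TGT = T` and the self-adjointness of `TG` we get `(TG)_{aj} = δ_{aj}` for `a ∈ Λ`, so
along a run `g` is constant except for a jump `+1` at `j`. Hence `g` vanishes off the run containing
`j`, and on it takes a value `α` and then `α + 1`, with `‖α‖ + ‖α + 1‖ = 1` because the run sum is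
zero. Each of the two pieces contributes a geometric sum of size at most `2 / ‖ω - 1‖` to the
Fourier coefficient, `ω = e^{2πik/N}`, and Jordan's inequality gives `‖ω - 1‖ ≥ √2 |k| / N`.
For `k = 0` the coefficient is the column sum, which is zero.
-/

open Finset Real

lemma conj_PLD (Λ : Finset ℕ) (a i : ℕ) : conj (PLD Λ a i) = PLD Λ a i := by
  unfold PLD; split_ifs <;> simp

lemma PLD_of_mem {Λ : Finset ℕ} {a : ℕ} (ha : a ∈ Λ) (i : ℕ) :
    PLD Λ a i = (if i = a + 1 then 1 else 0) - (if i = a then 1 else 0) := by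
  simp only [PLD, if_pos ha]
  split_ifs <;> first | omega | ring

lemma PLD_of_notMem {Λ : Finset ℕ} {a : ℕ} (ha : a ∉ Λ) (i : ℕ) : PLD Λ a i = 0 :=
  if_neg ha

lemma sum_PLD_mul {Λ : Finset ℕ} {N b : ℕ} (hb : b ∈ Icc 1 (N - 1)) (f : ℕ → ℂ) :
    ∑ m ∈ Icc 1 N, PLD Λ b m * f m = if b ∈ Λ then f (b + 1) - f b else 0 := by
  by_cases hbΛ : b ∈ Λ
  · have := mem_Icc.mp hb
    simp only [PLD_of_mem hbΛ, sub_mul, ite_mul, one_mul, zero_mul, sum_sub_distrib,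
      sum_ite_eq', if_pos hbΛ]
    rw [if_pos (mem_Icc.mpr (by omega)), if_pos (mem_Icc.mpr (by omega))]
  · simp [PLD_of_notMem hbΛ, hbΛ]

lemma sum_transpose_PLD_mul {Λ : Finset ℕ} {N i : ℕ} (hΛ : Λ ⊆ Icc 1 (N - 1)) (hi : 1 ≤ i)
    (v : ℕ → ℂ) :
    ∑ a ∈ Icc 1 (N - 1), PLD Λ a i * v a =
      (if i - 1 ∈ Λ then v (i - 1) else 0) - (if i ∈ Λ then v i else 0) := by
  rw [← sum_subset hΛ fun a _ ha => by rw [PLD_of_notMem ha, zero_mul]]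
  have hterm : ∀ a ∈ Λ, PLD Λ a i * v a =
      (if i - 1 = a then v a else 0) - (if i = a then v a else 0) := fun a ha => by
    rw [PLD_of_mem ha]
    split_ifs <;> first | omega | ring
  rw [sum_congr rfl hterm, sum_sub_distrib, sum_ite_eq, sum_ite_eq]

namespace IsPseudoInv

variable {N : ℕ} {Λ : Finset ℕ} {G : ℕ → ℕ → ℂ}

theorem exists_col_eq_sub (hG : IsPseudoInv N Λ G) (hΛ : Λ ⊆ Icc 1 (N - 1)) {j : ℕ}
    (hj : j ∈ Icc 1 (N - 1)) :
    ∃ w : ℕ → ℂ, (∀ a ∉ Λ, w a = 0) ∧ ∀ i ∈ Icc 1 N, G i j = w (i - 1) - w i := by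
  set v : ℕ → ℂ := fun a => ∑ b ∈ Icc 1 N, conj (G b a) * G b j
  refine ⟨fun a => if a ∈ Λ then v a else 0, fun a ha => if_neg ha, fun i hi => ?_⟩
  have hGT : ∀ b ∈ Icc 1 N, ∑ a ∈ Icc 1 (N - 1), G i a * PLD Λ a b =
      ∑ a ∈ Icc 1 (N - 1), conj (G b a) * PLD Λ a i := fun b hb => by
    rw [← hG.gt_sa i hi b hb, map_sum]
    simp only [map_mul, conj_PLD]
  calc G i j
      = ∑ b ∈ Icc 1 N, (∑ a ∈ Icc 1 (N - 1), G i a * PLD Λ a b) * G b j := by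
        rw [← hG.gtg i hi j hj, sum_comm]
        simp only [sum_mul]
    _ = ∑ a ∈ Icc 1 (N - 1), PLD Λ a i * v a := by
        rw [sum_congr rfl fun b hb => by rw [hGT b hb]]
        simp only [v, sum_mul, mul_sum]
        rw [sum_comm]
        exact sum_congr rfl fun a _ => sum_congr rfl fun b _ => by ring
    _ = _ := sum_transpose_PLD_mul hΛ (mem_Icc.mp hi).1 v

theorem sum_PLD_mul_eq_ite (hG : IsPseudoInv N Λ G) (hΛ : Λ ⊆ Icc 1 (N - 1)) {q a : ℕ}
    (hq : q ∈ Icc 1 (N - 1)) (ha : a ∈ Λ) :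
    ∑ m ∈ Icc 1 N, PLD Λ q m * G m a = if q = a then 1 else 0 := by
  -- `T` maps the indicator of `{a+1, …, N}` to `e_a`
  set f : ℕ → ℂ := fun m => if a < m then 1 else 0
  have hTf : ∀ b ∈ Icc 1 (N - 1), ∑ m ∈ Icc 1 N, PLD Λ b m * f m = if b = a then 1 else 0 := by
    intro b hb
    rw [sum_PLD_mul hb]
    by_cases hba : b = a
    · subst hba; simp [f, ha]
    · rw [if_neg hba]
      simp only [f, show a < b + 1 ↔ a < b by omega, sub_self, ite_self]
  calc ∑ m ∈ Icc 1 N, PLD Λ q m * G m a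
      = ∑ m ∈ Icc 1 N, ∑ b ∈ Icc 1 (N - 1),
          PLD Λ q m * G m b * ∑ m' ∈ Icc 1 N, PLD Λ b m' * f m' := by
        refine sum_congr rfl fun m _ => ?_
        rw [sum_congr rfl fun b hb => by rw [hTf b hb]]
        simp only [mul_ite, mul_one, mul_zero, sum_ite_eq', if_pos (hΛ ha)]
    _ = ∑ m' ∈ Icc 1 N, (∑ m ∈ Icc 1 N, ∑ b ∈ Icc 1 (N - 1),
          PLD Λ q m * G m b * PLD Λ b m') * f m' := by
        simp_rw [mul_sum, sum_mul]
        conv_rhs => rw [sum_comm]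
        refine sum_congr rfl fun m _ => ?_
        rw [sum_comm]
        exact sum_congr rfl fun _ _ => sum_congr rfl fun _ _ => by ring
    _ = ∑ m' ∈ Icc 1 N, PLD Λ q m' * f m' :=
        sum_congr rfl fun m' hm' => by rw [hG.tgt q hq m' hm']
    _ = _ := hTf q hq

theorem col_succ_sub (hG : IsPseudoInv N Λ G) (hΛ : Λ ⊆ Icc 1 (N - 1)) {j a : ℕ}
    (hj : j ∈ Icc 1 (N - 1)) (ha : a ∈ Λ) :
    G (a + 1) j - G a j = if a = j then 1 else 0 := by
  have haI := hΛ ha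
  calc G (a + 1) j - G a j = ∑ m ∈ Icc 1 N, PLD Λ a m * G m j := by
        rw [sum_PLD_mul haI, if_pos ha]
    _ = conj (∑ m ∈ Icc 1 N, PLD Λ j m * G m a) := (hG.tg_sa a haI j hj).symm
    _ = if a = j then 1 else 0 := by
        rw [hG.sum_PLD_mul_eq_ite hΛ hj ha]
        split_ifs <;> first | omega | simp

end IsPseudoInv

lemma sum_Icc_eq_sub_of_eq_sub {M : Type*} [AddCommGroup M] {g w : ℕ → M} {p q : ℕ}
    (hp : 1 ≤ p) (hpq : p ≤ q + 1) (hg : ∀ i ∈ Icc p q, g i = w (i - 1) - w i) :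
    ∑ i ∈ Icc p q, g i = w (p - 1) - w q := by
  induction q, (by omega : p - 1 ≤ q) using Nat.le_induction with
  | base => simp [Icc_eq_empty_of_lt (by omega : p - 1 < p)]
  | succ q hq ih =>
    rw [sum_Icc_succ_top (by omega),
      ih (by omega) fun i hi => hg i (Icc_subset_Icc_right q.le_succ hi),
      hg (q + 1) (mem_Icc.mpr ⟨by omega, le_rfl⟩), Nat.add_sub_cancel]
    abel

lemma sum_Icc_add_sum_Icc {M : Type*} [AddCommMonoid M] (f : ℕ → M) {p j q : ℕ}
    (hpj : p ≤ j + 1) (hjq : j ≤ q) :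
    ∑ i ∈ Icc p j, f i + ∑ i ∈ Icc (j + 1) q, f i = ∑ i ∈ Icc p q, f i := by
  simp only [← Ico_add_one_right_eq_Icc]
  exact sum_Ico_consecutive f hpj (by omega)

lemma eq_of_forall_mem_Ico_succ_eq {α : Type*} {g : ℕ → α} {p q : ℕ}
    (h : ∀ a ∈ Ico p q, g (a + 1) = g a) : ∀ m ∈ Icc p q, g m = g p := by
  intro m hm
  obtain ⟨hpm, hmq⟩ := mem_Icc.mp hm
  induction m, hpm using Nat.le_induction with
  | base => rfl
  | succ m hpm ih =>
    rw [h m (mem_Ico.mpr ⟨hpm, by omega⟩), ih (mem_Icc.mpr ⟨hpm, by omega⟩) (by omega)]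

lemma zero_notMem_and_notMem_of_subset_Icc {s : Finset ℕ} {N : ℕ} (hs : s ⊆ Icc 1 (N - 1)) :
    0 ∉ s ∧ N ∉ s :=
  ⟨fun h => by simpa using hs h, fun h => by have := mem_Icc.mp (hs h); omega⟩

lemma exists_run_start {s : Finset ℕ} (h0 : 0 ∉ s) {m : ℕ} (hm : 1 ≤ m) :
    ∃ p, 1 ≤ p ∧ p ≤ m ∧ p - 1 ∉ s ∧ Ico p m ⊆ s := by
  induction m, hm using Nat.le_induction with
  | base => exact ⟨1, le_rfl, le_rfl, h0, by simp⟩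
  | succ m hm ih =>
    by_cases hms : m ∈ s
    · obtain ⟨p, hp1, hpm, hp, hps⟩ := ih
      refine ⟨p, hp1, by omega, hp, fun i hi => ?_⟩
      rcases eq_or_ne i m with rfl | him
      · exact hms
      · exact hps (by simp only [mem_Ico] at hi ⊢; omega)
    · exact ⟨m + 1, by omega, le_rfl, hms, by simp⟩

lemma exists_run_end {s : Finset ℕ} {N m : ℕ} (hN : N ∉ s) (hm : m ≤ N) :
    ∃ q, m ≤ q ∧ q ≤ N ∧ q ∉ s ∧ Ico m q ⊆ s := by
  induction hm using Nat.decreasingInduction with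
  | self => exact ⟨N, le_rfl, le_rfl, hN, by simp⟩
  | of_succ m hmN ih =>
    by_cases hms : m ∈ s
    · obtain ⟨q, hmq, hqN, hq, hqs⟩ := ih
      refine ⟨q, by omega, hqN, hq, fun i hi => ?_⟩
      rcases eq_or_ne i m with rfl | him
      · exact hms
      · exact hqs (by simp only [mem_Ico] at hi ⊢; omega)
    · exact ⟨m, le_rfl, hmN.le, hms, by simp⟩

lemma exists_run {s : Finset ℕ} {N m : ℕ} (h0 : 0 ∉ s) (hN : N ∉ s) (hm : m ∈ Icc 1 N) :
    ∃ p q, 1 ≤ p ∧ p ≤ m ∧ m ≤ q ∧ q ≤ N ∧ p - 1 ∉ s ∧ q ∉ s ∧ Ico p q ⊆ s := by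
  obtain ⟨hm1, hmN⟩ := mem_Icc.mp hm
  obtain ⟨p, hp1, hpm, hp, hps⟩ := exists_run_start h0 hm1
  obtain ⟨q, hmq, hqN, hq, hqs⟩ := exists_run_end hN hmN
  exact ⟨p, q, hp1, hpm, hmq, hqN, hp, hq, Ico_union_Ico_eq_Ico hpm hmq ▸ union_subset hps hqs⟩

lemma norm_add_norm_add_one_eq_one {a b : ℕ} (hab : a + b ≠ 0) {α : ℂ}
    (h : a * α + b * (α + 1) = 0) : ‖α‖ + ‖α + 1‖ = 1 := by
  have hpos : (0 : ℝ) < a + b := by exact_mod_cast Nat.pos_of_ne_zero hab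
  set t : ℝ := b / (a + b)
  have ht0 : 0 ≤ t := by positivity
  have ht1 : t ≤ 1 := div_le_one_of_le₀ (by linarith [(a.cast_nonneg : (0 : ℝ) ≤ a)]) hpos.le
  have hα : α = ((-t : ℝ) : ℂ) := by
    have : ((a + b : ℝ) : ℂ) ≠ 0 := by exact_mod_cast hpos.ne'
    simp only [t, Complex.ofReal_neg, Complex.ofReal_div]
    push_cast at this ⊢
    field_simp
    linear_combination h
  rw [hα, ← Complex.ofReal_one, ← Complex.ofReal_add, Complex.norm_real, Complex.norm_real,
    Real.norm_of_nonpos (by linarith), Real.norm_of_nonneg (by linarith)]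
  ring

lemma two_mul_div_le_sin_pi_mul_div {N n : ℕ} (hN : 0 < N) (hn : 2 * n ≤ N) :
    2 * n / N ≤ sin (π * n / N) := by
  have hNR : (0 : ℝ) < N := by exact_mod_cast hN
  have hnR : (2 * n : ℝ) ≤ N := by exact_mod_cast hn
  have h := mul_le_sin (x := π * n / N) (by positivity) (by
    rw [div_le_div_iff₀ hNR two_pos]; nlinarith [pi_pos])
  rwa [show 2 / π * (π * n / N) = 2 * n / N by field_simp] at h

lemma sqrt_two_mul_div_le_two_mul_sin {N m : ℕ} (hN : 2 ≤ N) (hm : 1 ≤ m) (hmN : 2 * m ≤ N + 1) :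
    √2 * m / N ≤ 2 * sin (π * m / N) := by
  -- reflect `m` to `N - m` when `π m / N` exceeds `π / 2`, so that Jordan's inequality applies
  obtain ⟨n, hsin, hnN, hmn⟩ :
      ∃ n : ℕ, sin (π * m / N) = sin (π * n / N) ∧ 2 * n ≤ N ∧ m ≤ 2 * n := by
    by_cases h : 2 * m ≤ N
    · exact ⟨m, rfl, h, by omega⟩
    · refine ⟨N - m, ?_, by omega, by omega⟩
      rw [← sin_pi_sub, Nat.cast_sub (by omega)]
      congr 1
      field_simp
  have hmnR : (m : ℝ) ≤ 2 * n := by exact_mod_cast hmn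
  have hsqrt : √2 ≤ 2 := sqrt_le_iff.mpr ⟨by norm_num, by norm_num⟩
  rw [hsin]
  calc √2 * m / N ≤ 2 * (2 * n / N) := by
        rw [← mul_div_assoc]
        gcongr
    _ ≤ 2 * sin (π * n / N) := by gcongr; exact two_mul_div_le_sin_pi_mul_div (by omega) hnN

lemma sqrt_two_mul_div_le_norm_exp_sub_one {N : ℕ} (hN : 2 ≤ N) {k : ℤ} (hk0 : k ≠ 0)
    (hk : 2 * k.natAbs ≤ N + 1) :
    √2 * |(k : ℝ)| / N ≤ ‖Complex.exp (↑(2 * π * k / N) * Complex.I) - 1‖ := by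
  rw [mul_comm _ Complex.I, Complex.norm_exp_I_mul_ofReal_sub_one, norm_mul, norm_eq_abs,
    norm_eq_abs, abs_two, show 2 * π * k / N / 2 = π * k / N by ring]
  obtain ⟨m, hkm⟩ := Int.eq_nat_or_neg k
  have hm : k.natAbs = m ∧ |(k : ℝ)| = m ∧ |sin (π * k / N)| = |sin (π * m / N)| := by
    rcases hkm with rfl | rfl <;> simp [neg_div, sin_neg]
  rw [hm.2.1, hm.2.2]
  exact (sqrt_two_mul_div_le_two_mul_sin hN (by omega) (by omega)).trans
    (by gcongr; exact le_abs_self _)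

lemma norm_geom_sum_Icc_le {ω : ℂ} (hω : ‖ω‖ = 1) (hω1 : ω ≠ 1) (m n : ℕ) :
    ‖∑ i ∈ Icc m n, ω ^ i‖ ≤ 2 / ‖ω - 1‖ := by
  rw [← Ico_add_one_right_eq_Icc]
  rcases le_or_gt m (n + 1) with h | h
  · rw [geom_sum_Ico hω1 h, norm_div]
    gcongr
    calc ‖ω ^ (n + 1) - ω ^ m‖ ≤ ‖ω ^ (n + 1)‖ + ‖ω ^ m‖ := norm_sub_le _ _
      _ = 2 := by simp only [norm_pow, hω, one_pow]; norm_num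
  · rw [Ico_eq_empty_of_le h.le, sum_empty, norm_zero]
    positivity

lemma dft_eq_sum_mul_pow (N : ℕ) (y : ℕ → ℂ) (k : ℤ) :
    dft N y k = (√N)⁻¹ * ∑ i ∈ Icc 1 N, y i * Complex.exp (↑(2 * π * k / N) * Complex.I) ^ i := by
  unfold dft
  congr 1
  refine sum_congr rfl fun i _ => ?_
  rw [← Complex.exp_nat_mul]
  push_cast
  ring_nf

lemma dft_zero (N : ℕ) (y : ℕ → ℂ) : dft N y 0 = (√N)⁻¹ * ∑ i ∈ Icc 1 N, y i := by
  simp [dft]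

lemma norm_dft_le_of_norm_sum_mul_pow_le {N : ℕ} (hN : 2 ≤ N) {y : ℕ → ℂ}
    (hy : ∀ ω : ℂ, ‖ω‖ = 1 → ω ≠ 1 → ‖∑ i ∈ Icc 1 N, y i * ω ^ i‖ ≤ 2 / ‖ω - 1‖) {k : ℤ}
    (hk0 : k ≠ 0) (hk : 2 * k.natAbs ≤ N + 1) : ‖dft N y k‖ ≤ √2 * √N / |(k : ℝ)| := by
  have hdist := sqrt_two_mul_div_le_norm_exp_sub_one hN hk0 hk
  set ω := Complex.exp (↑(2 * π * k / N) * Complex.I)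
  have hdist_pos : 0 < √2 * |(k : ℝ)| / N := by
    have : (k : ℝ) ≠ 0 := by exact_mod_cast hk0
    positivity
  have hω1 : ω ≠ 1 := fun h => by rw [h, sub_self, norm_zero] at hdist; linarith
  rw [dft_eq_sum_mul_pow, norm_mul, Complex.norm_real, norm_inv, norm_eq_abs,
    abs_of_nonneg (sqrt_nonneg _)]
  calc (√N)⁻¹ * ‖∑ i ∈ Icc 1 N, y i * ω ^ i‖ ≤ (√N)⁻¹ * (2 / ‖ω - 1‖) := by
        gcongr
        exact hy ω (Complex.norm_exp_ofReal_mul_I _) hω1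
    _ ≤ (√N)⁻¹ * (2 / (√2 * |(k : ℝ)| / N)) := by gcongr
    _ = √2 * √N / |(k : ℝ)| := by
        have hN0 : (0 : ℝ) < N := by positivity
        field_simp
        rw [sq_sqrt zero_le_two, sq_sqrt hN0.le, mul_comm]

section Runs

variable {s : Finset ℕ} {N j : ℕ} {g w : ℕ → ℂ}

lemma eq_zero_of_run (hw : ∀ a ∉ s, w a = 0) (hg : ∀ i ∈ Icc 1 N, g i = w (i - 1) - w i)
    (hjump : ∀ a ∈ s, g (a + 1) - g a = if a = j then 1 else 0) {p q : ℕ} (hp1 : 1 ≤ p)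
    (hpq : p ≤ q) (hqN : q ≤ N) (hp : p - 1 ∉ s) (hq : q ∉ s) (hrun : Ico p q ⊆ s)
    (hj : j ∉ Ico p q) : ∀ m ∈ Icc p q, g m = 0 := by
  have hconst := eq_of_forall_mem_Ico_succ_eq fun a ha => by
    have := hjump a (hrun ha)
    rwa [if_neg (ne_of_mem_of_not_mem ha hj), sub_eq_zero] at this
  have hsum : ∑ i ∈ Icc p q, g i = 0 := by
    rw [sum_Icc_eq_sub_of_eq_sub hp1 (by omega) fun i hi => hg i (Icc_subset_Icc hp1 hqN hi),
      hw _ hp, hw _ hq, sub_zero]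
  rw [sum_congr rfl hconst, sum_const, Nat.card_Icc, nsmul_eq_mul, mul_eq_zero] at hsum
  have hgp : g p = 0 := hsum.resolve_left (by norm_cast; omega)
  exact fun m hm => (hconst m hm).trans hgp

lemma eq_zero_of_separated (hs0 : 0 ∉ s) (hsN : N ∉ s) (hw : ∀ a ∉ s, w a = 0)
    (hg : ∀ i ∈ Icc 1 N, g i = w (i - 1) - w i)
    (hjump : ∀ a ∈ s, g (a + 1) - g a = if a = j then 1 else 0) {m b : ℕ} (hm : m ∈ Icc 1 N)
    (hb : b ∉ s) (hbm : m ≤ b ∧ b ≤ j ∨ j ≤ b ∧ b < m) : g m = 0 := by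
  obtain ⟨p, q, hp1, hpm, hmq, hqN, hp, hq, hrun⟩ := exists_run hs0 hsN hm
  refine eq_zero_of_run hw hg hjump hp1 (by omega) hqN hp hq hrun (fun hj => hb ?_) m
    (mem_Icc.mpr ⟨hpm, hmq⟩)
  exact hrun (by simp only [mem_Ico] at hj ⊢; omega)

lemma exists_eq_of_mem_run (hw : ∀ a ∉ s, w a = 0) (hg : ∀ i ∈ Icc 1 N, g i = w (i - 1) - w i)
    (hjump : ∀ a ∈ s, g (a + 1) - g a = if a = j then 1 else 0) {p q : ℕ} (hp1 : 1 ≤ p)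
    (hqN : q ≤ N) (hp : p - 1 ∉ s) (hq : q ∉ s) (hrun : Ico p q ⊆ s) (hj : j ∈ Ico p q) :
    ∃ α : ℂ, ‖α‖ + ‖α + 1‖ = 1 ∧ (∀ m ∈ Icc p j, g m = α) ∧ ∀ m ∈ Icc (j + 1) q, g m = α + 1 := by
  obtain ⟨hpj, hjq⟩ := mem_Ico.mp hj
  have hstep : ∀ a ∈ Ico p q, a ≠ j → g (a + 1) = g a := fun a ha haj => by
    have := hjump a (hrun ha)
    rwa [if_neg haj, sub_eq_zero] at this
  have hlow := eq_of_forall_mem_Ico_succ_eq fun a ha =>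
    hstep a (Ico_subset_Ico_right hjq.le ha) (mem_Ico.mp ha).2.ne
  have hhigh := eq_of_forall_mem_Ico_succ_eq (p := j + 1) (q := q) fun a ha =>
    hstep a (Ico_subset_Ico_left (by omega) ha) (by simp only [mem_Ico] at ha; omega)
  have hjump_j : g (j + 1) = g p + 1 := by
    have := hjump j (hrun hj)
    rw [if_pos rfl, hlow j (by simp [hpj])] at this
    linear_combination this
  refine ⟨g p, ?_, hlow, fun m hm => (hhigh m hm).trans hjump_j⟩
  have hsum : ∑ i ∈ Icc p q, g i = 0 := by
    rw [sum_Icc_eq_sub_of_eq_sub hp1 (by omega) fun i hi => hg i (Icc_subset_Icc hp1 hqN hi),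
      hw _ hp, hw _ hq, sub_zero]
  rw [← sum_Icc_add_sum_Icc g (by omega) hjq.le, sum_congr rfl hlow,
    sum_congr rfl fun m hm => (hhigh m hm).trans hjump_j, sum_const, sum_const, Nat.card_Icc,
    Nat.card_Icc, nsmul_eq_mul, nsmul_eq_mul] at hsum
  exact norm_add_norm_add_one_eq_one (by omega) hsum

lemma norm_sum_mul_pow_le (hs : s ⊆ Icc 1 (N - 1))
    (hw : ∀ a ∉ s, w a = 0) (hg : ∀ i ∈ Icc 1 N, g i = w (i - 1) - w i)
    (hjump : ∀ a ∈ s, g (a + 1) - g a = if a = j then 1 else 0) {ω : ℂ} (hω : ‖ω‖ = 1)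
    (hω1 : ω ≠ 1) : ‖∑ i ∈ Icc 1 N, g i * ω ^ i‖ ≤ 2 / ‖ω - 1‖ := by
  obtain ⟨hs0, hsN⟩ := zero_notMem_and_notMem_of_subset_Icc hs
  have hsep := @eq_zero_of_separated s N j g w hs0 hsN hw hg hjump
  by_cases hjs : j ∈ s
  · have hjN := mem_Icc.mp (hs hjs)
    obtain ⟨p, q, hp1, hpj, hjq, hqN, hp, hq, hrun⟩ := exists_run hs0 hsN (m := j)
      (mem_Icc.mpr ⟨hjN.1, by omega⟩)
    have hjq' : j < q := lt_of_le_of_ne hjq (ne_of_mem_of_not_mem hjs hq)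
    obtain ⟨α, hα, hlow, hhigh⟩ :=
      exists_eq_of_mem_run hw hg hjump hp1 hqN hp hq hrun (mem_Ico.mpr ⟨hpj, hjq'⟩)
    have hsupp : ∑ i ∈ Icc 1 N, g i * ω ^ i = ∑ i ∈ Icc p q, g i * ω ^ i := by
      refine (sum_subset (Icc_subset_Icc hp1 hqN) fun m hm hmpq => ?_).symm
      rw [mem_Icc, not_and_or, not_le, not_le] at hmpq
      rw [hmpq.elim (fun h => hsep hm hp (by omega)) (fun h => hsep hm hq (by omega)), zero_mul]
    have hlow' : ∑ i ∈ Icc p j, g i * ω ^ i = α * ∑ i ∈ Icc p j, ω ^ i := by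
      rw [mul_sum]; exact sum_congr rfl fun m hm => by rw [hlow m hm]
    have hhigh' : ∑ i ∈ Icc (j + 1) q, g i * ω ^ i = (α + 1) * ∑ i ∈ Icc (j + 1) q, ω ^ i := by
      rw [mul_sum]; exact sum_congr rfl fun m hm => by rw [hhigh m hm]
    rw [hsupp, ← sum_Icc_add_sum_Icc _ (by omega) hjq, hlow', hhigh']
    calc _ ≤ ‖α‖ * (2 / ‖ω - 1‖) + ‖α + 1‖ * (2 / ‖ω - 1‖) := by
          refine norm_add_le_of_le ?_ ?_ <;>
            rw [norm_mul] <;> gcongr <;> exact norm_geom_sum_Icc_le hω hω1 _ _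
      _ = 2 / ‖ω - 1‖ := by rw [← add_mul, hα, one_mul]
  · rw [sum_eq_zero fun m hm => by rw [hsep hm hjs (by omega), zero_mul], norm_zero]
    positivity

end Runs

theorem stmt14 (N : ℕ) (Λ : Finset ℕ) (hΛ : Λ ⊆ Finset.Icc 1 (N - 1))
    (G : ℕ → ℕ → ℂ) (hG : IsPseudoInv N Λ G) :
    ∀ j ∈ Finset.Icc 1 (N - 1),
      (∀ k : ℤ, 1 ≤ k.natAbs → k.natAbs ≤ (N + 1) / 2 →
        ‖dft N (fun i => G i j) k‖ ≤
          Real.sqrt 2 * Real.sqrt N / |(k : ℝ)|) ∧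
      ‖dft N (fun i => G i j) 0‖ ≤ Real.sqrt N := by
  intro j hj
  obtain ⟨w, hw, hcol⟩ := hG.exists_col_eq_sub hΛ hj
  have hjump : ∀ a ∈ Λ, G (a + 1) j - G a j = if a = j then 1 else 0 :=
    fun a ha => hG.col_succ_sub hΛ hj ha
  refine ⟨fun k hk1 hk2 => norm_dft_le_of_norm_sum_mul_pow_le (by have := mem_Icc.mp hj; omega)
    (fun ω hω hω1 => norm_sum_mul_pow_le hΛ hw hcol hjump hω hω1) (by omega) (by omega), ?_⟩
  obtain ⟨h0, hN⟩ := zero_notMem_and_notMem_of_subset_Icc hΛ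
  rw [dft_zero, sum_Icc_eq_sub_of_eq_sub le_rfl (by omega) hcol, hw 0 h0, hw N hN]
  simp [sqrt_nonneg]
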